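/- arXiv:2004.14241 — 6 statements merged into one kernel-verified Lean document; each statement's English description precedes it below -/
import Mathlib

section
/- Let q be a prime power, n ≥ 1, and let U, W be subspaces of 𝔽_q^n. Then the subspace distance satisfies d_S(U,W) ≥ d_H(v(U), v(W)), i.e., dim(U) + dim(W) − 2·dim(U ∩ W) is at least the Hamming distance between the identifying vectors of U and W. -/
/-- Projection of `F^n` onto the first `i` coordinates (realized as the linear
endomorphism of `F^n` that zeroes out all coordinates with index `≥ i`). -/
def zeroProj (F : Type*) [Field F] (n i : ℕ) : (Fin n → F) →ₗ[F] (Fin n → F) where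
  toFun x := fun j => if (j : ℕ) < i then x j else 0
  map_add' x y := by
    funext j; by_cases h : (j : ℕ) < i <;> simp [h]
  map_smul' c x := by
    funext j; by_cases h : (j : ℕ) < i <;> simp [h]

/-- `projDim F U i = dim π_i(U)`, the dimension of the projection of `U` onto the
first `i` coordinates. -/
noncomputable def projDim (F : Type*) [Field F] {n : ℕ} (U : Submodule F (Fin n → F))
    (i : ℕ) : ℕ :=
  Module.finrank F ↥(U.map (zeroProj F n i))

/-- Subspace distance `d_S(U,W) = dim U + dim W - 2 dim (U ∩ W)`. -/
noncomputable def subspaceDist (F : Type*) [Field F] {n : ℕ}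
    (U W : Submodule F (Fin n → F)) : ℕ :=
  Module.finrank F ↥U + Module.finrank F ↥W - 2 * Module.finrank F ↥(U ⊓ W)

/-- Identifying vector `v(U) ∈ 𝔽₂ⁿ`: `v(U)_i = 1` iff `dim π_i(U) > dim π_{i-1}(U)`. -/
noncomputable def idVec (F : Type*) [Field F] {n : ℕ} (U : Submodule F (Fin n → F)) :
    Fin n → Bool :=
  fun i => decide (projDim F U (i : ℕ) < projDim F U ((i : ℕ) + 1))
/-!
The dimension of `π_i(S)` grows by at most one from `i` to `i + 1`, namely by the dimension of
the image of `S ∩ ker π_i` under the `i`-th coordinate. Hence the pivot set `P_S` of `S` has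
`dim S` elements, and `i ∈ P_S` iff some `x ∈ S` vanishes before `i` and not at `i`; in particular
`P_{U ∩ W} ⊆ P_U ∩ P_W`. Counting,
`d_H(v(U), v(W)) = |P_U| + |P_W| - 2 |P_U ∩ P_W| ≤ dim U + dim W - 2 dim (U ∩ W)`.
-/

open Module Finset LinearMap

theorem Submodule.finrank_map_add_finrank_inf_ker {K V W : Type*} [Field K] [AddCommGroup V]
    [Module K V] [AddCommGroup W] [Module K W] [FiniteDimensional K V]
    (S : Submodule K V) (f : V →ₗ[K] W) :
    finrank K (S.map f) + finrank K ↥(S ⊓ ker f) = finrank K S := by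
  rw [← Submodule.map_comap_subtype, Submodule.finrank_map_subtype_eq, ← ker_domRestrict,
    ← range_domRestrict]
  exact finrank_range_add_finrank_ker _

theorem hammingDist_add_two_mul_card_le {ι : Type*} [Fintype ι] {u w c : ι → Bool}
    (hu : c ≤ u) (hw : c ≤ w) :
    hammingDist u w + 2 * #{i | c i} ≤ #{i | u i} + #{i | w i} := by
  simp only [hammingDist, card_filter, mul_sum, ← sum_add_distrib]
  refine sum_le_sum fun i _ => ?_
  have hui := hu i
  have hwi := hw i
  revert hui hwi
  cases u i <;> cases w i <;> cases c i <;> simp [Bool.le_iff_imp]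

section

variable {F : Type*} [Field F] {n : ℕ}

theorem zeroProj_apply (i : ℕ) (x : Fin n → F) (j : Fin n) :
    zeroProj F n i x j = if (j : ℕ) < i then x j else 0 := rfl

theorem zeroProj_zero : zeroProj F n 0 = 0 := by
  ext x j
  simp [zeroProj_apply]

theorem zeroProj_self : zeroProj F n n = LinearMap.id := by
  ext x j
  simp [zeroProj_apply]

theorem ker_zeroProj_succ {i : ℕ} (hi : i < n) :
    ker (zeroProj F n (i + 1)) = ker (zeroProj F n i) ⊓ ker (proj ⟨i, hi⟩) := by
  ext x
  simp only [mem_ker, funext_iff, zeroProj_apply, Order.lt_add_one_iff, Pi.zero_apply,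
    ite_eq_right_iff, Submodule.mem_inf, coe_proj, Function.eval]
  constructor
  · intro h
    exact ⟨fun j hj => h j hj.le, h _ le_rfl⟩
  · rintro ⟨h, hxi⟩ j hj
    rcases hj.lt_or_eq with hj | hj
    · exact h j hj
    · obtain rfl : j = ⟨i, hi⟩ := Fin.ext hj
      exact hxi

theorem projDim_zero (S : Submodule F (Fin n → F)) : projDim F S 0 = 0 := by
  simp [projDim, zeroProj_zero]

theorem projDim_self (S : Submodule F (Fin n → F)) : projDim F S n = finrank F S := by
  rw [projDim, zeroProj_self, Submodule.map_id]

theorem projDim_succ (S : Submodule F (Fin n → F)) {i : ℕ} (hi : i < n) :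
    projDim F S (i + 1) =
      projDim F S i + finrank F ↥((S ⊓ ker (zeroProj F n i)).map (proj ⟨i, hi⟩)) := by
  have hrank := S.finrank_map_add_finrank_inf_ker (zeroProj F n i)
  have hrank_succ := S.finrank_map_add_finrank_inf_ker (zeroProj F n (i + 1))
  have hstep := (S ⊓ ker (zeroProj F n i)).finrank_map_add_finrank_inf_ker (proj ⟨i, hi⟩)
  rw [inf_assoc, ← ker_zeroProj_succ] at hstep
  unfold projDim
  omega

theorem projDim_lt_succ_iff (S : Submodule F (Fin n → F)) {i : ℕ} (hi : i < n) :
    projDim F S i < projDim F S (i + 1) ↔ ∃ x ∈ S, zeroProj F n i x = 0 ∧ x ⟨i, hi⟩ ≠ 0 := by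
  rw [projDim_succ S hi, Nat.lt_add_right_iff_pos, Nat.pos_iff_ne_zero, Ne,
    Submodule.finrank_eq_zero, ← Ne, Submodule.ne_bot_iff]
  simp [and_assoc]

theorem projDim_succ_le (S : Submodule F (Fin n → F)) {i : ℕ} (hi : i < n) :
    projDim F S (i + 1) ≤ projDim F S i + 1 := by
  rw [projDim_succ S hi]
  exact Nat.add_le_add_left ((Submodule.finrank_le _).trans (finrank_self F).le) _

theorem natCast_projDim_succ_sub (S : Submodule F (Fin n → F)) (i : Fin n) :
    (projDim F S (i + 1) : ℤ) - projDim F S i = if idVec F S i then 1 else 0 := by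
  have hsucc := projDim_succ S i.isLt
  have hsucc_le := projDim_succ_le S i.isLt
  unfold idVec
  split_ifs with h <;> simp only [decide_eq_true_eq] at h <;> omega

theorem card_idVec_eq_finrank (S : Submodule F (Fin n → F)) :
    #{i | idVec F S i} = finrank F S := by
  have : (#{i | idVec F S i} : ℤ) = projDim F S n - projDim F S 0 := by
    rw [natCast_card_filter, ← sum_range_sub (fun i => (projDim F S i : ℤ)),
      ← Fin.sum_univ_eq_sum_range (fun i => (projDim F S (i + 1) : ℤ) - projDim F S i)]
    exact sum_congr rfl fun i _ => (natCast_projDim_succ_sub S i).symm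
  rw [projDim_self, projDim_zero] at this
  omega

theorem idVec_mono {S T : Submodule F (Fin n → F)} (h : S ≤ T) : idVec F S ≤ idVec F T := by
  intro i
  simp only [idVec, Bool.le_iff_imp, decide_eq_true_eq, projDim_lt_succ_iff _ i.isLt]
  exact fun ⟨x, hx, hx'⟩ => ⟨x, h hx, hx'⟩

end

theorem statement0_general (n : ℕ) (F : Type*) [Field F] (U W : Submodule F (Fin n → F)) :
    hammingDist (idVec F U) (idVec F W) ≤ subspaceDist F U W := by
  have h := hammingDist_add_two_mul_card_le (idVec_mono (inf_le_left : U ⊓ W ≤ U))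
    (idVec_mono inf_le_right)
  rw [card_idVec_eq_finrank, card_idVec_eq_finrank, card_idVec_eq_finrank] at h
  rw [subspaceDist]
  omega

theorem statement0 (q n : ℕ) (hq : IsPrimePow q) (hn : 1 ≤ n)
    (F : Type*) [Field F] [Fintype F] (hF : Fintype.card F = q)
    (U W : Submodule F (Fin n → F)) :
    hammingDist (idVec F U) (idVec F W) ≤ subspaceDist F U W :=
  statement0_general n F U W
end

section
/- Let q be a prime power and k ≤ n. For matrices A, B ∈ 𝔽_q^{k×(n−k)}, let U be the row space of the block matrix (I_k | A) and W the row space of (I_k | B), both regarded as subspaces of 𝔽_q^n. Then dim(U) = dim(W) = k and d_S(U,W) = 2·rank(A − B). (This is the case of the paper's Lemma 2 — d_S(U,W) = 2·d_R(E(U),E(W)) when U and W have the same identifying vector — for the identifying vector (1,…,1,0,…,0) with k ones.) -/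
/-- The `k × n` matrix `(I_k | A)`: the horizontal concatenation of the `k × k`
identity matrix with `A ∈ F^{k×(n-k)}`. -/
def concatIA (F : Type*) [Field F] {k n : ℕ} (hk : k ≤ n)
    (A : Matrix (Fin k) (Fin (n - k)) F) : Matrix (Fin k) (Fin n) F :=
  Matrix.of fun i j =>
    if hj : (j : ℕ) < k then (if (i : ℕ) = (j : ℕ) then 1 else 0)
    else A i ⟨(j : ℕ) - k, by have := j.isLt; omega⟩

/-- The row space of a matrix, as a subspace of `F^n`. -/
def rowSpace (F : Type*) [Field F] {k n : ℕ} (M : Matrix (Fin k) (Fin n) F) :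
    Submodule F (Fin n → F) :=
  Submodule.span F (Set.range fun i : Fin k => M i)

open Matrix Module

theorem Matrix.rank_add_finrank_ker_vecMulLinear {R m n : Type*} [Field R] [Fintype m]
    [Fintype n] (M : Matrix m n R) :
    M.rank + finrank R (LinearMap.ker M.vecMulLinear) = Fintype.card m := by
  rw [rank_eq_finrank_span_row, ← range_vecMulLinear, LinearMap.finrank_range_add_finrank_ker,
    finrank_fintype_fun_eq_card]

section ConcatIA

variable {F : Type*} [Field F] {k n : ℕ}

theorem rowSpace_eq_range_vecMulLinear (M : Matrix (Fin k) (Fin n) F) :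
    rowSpace F M = LinearMap.range M.vecMulLinear :=
  (range_vecMulLinear M).symm

variable (hk : k ≤ n)

theorem vecMul_concatIA_apply_of_lt (A : Matrix (Fin k) (Fin (n - k)) F) (x : Fin k → F)
    (j : Fin n) (hj : (j : ℕ) < k) :
    (x ᵥ* concatIA F hk A) j = x ⟨j, hj⟩ := by
  simp only [vecMul, dotProduct, concatIA, of_apply, hj, dif_pos]
  rw [Finset.sum_eq_single ⟨j, hj⟩ (fun i _ hi => by simp [Fin.ext_iff.not.mp hi]) (by simp)]
  simp

theorem vecMul_concatIA_apply_of_not_lt (A : Matrix (Fin k) (Fin (n - k)) F) (x : Fin k → F)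
    (j : Fin n) (hj : ¬(j : ℕ) < k) :
    (x ᵥ* concatIA F hk A) j = (x ᵥ* A) ⟨j - k, by omega⟩ := by
  simp only [vecMul, dotProduct, concatIA, of_apply, hj, dif_neg, not_false_iff]

theorem vecMul_concatIA_eq_iff (A B : Matrix (Fin k) (Fin (n - k)) F) (x z : Fin k → F) :
    x ᵥ* concatIA F hk A = z ᵥ* concatIA F hk B ↔ x = z ∧ x ᵥ* A = z ᵥ* B := by
  constructor
  · intro h
    refine ⟨funext fun i => ?_, funext fun t => ?_⟩
    · have hi := congr_fun h ⟨i, i.isLt.trans_le hk⟩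
      rwa [vecMul_concatIA_apply_of_lt hk _ _ _ i.isLt,
        vecMul_concatIA_apply_of_lt hk _ _ _ i.isLt] at hi
    · have ht := congr_fun h ⟨k + t, by omega⟩
      have hge : ¬k + (t : ℕ) < k := by omega
      rw [vecMul_concatIA_apply_of_not_lt hk _ _ _ hge,
        vecMul_concatIA_apply_of_not_lt hk _ _ _ hge] at ht
      simpa using ht
  · rintro ⟨rfl, hAB⟩
    funext j
    by_cases hj : (j : ℕ) < k
    · rw [vecMul_concatIA_apply_of_lt hk _ _ _ hj, vecMul_concatIA_apply_of_lt hk _ _ _ hj]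
    · rw [vecMul_concatIA_apply_of_not_lt hk _ _ _ hj,
        vecMul_concatIA_apply_of_not_lt hk _ _ _ hj, hAB]

theorem vecMulLinear_concatIA_injective (A : Matrix (Fin k) (Fin (n - k)) F) :
    Function.Injective (concatIA F hk A).vecMulLinear :=
  fun _ _ h => ((vecMul_concatIA_eq_iff hk A A _ _).mp h).1

theorem finrank_rowSpace_concatIA (A : Matrix (Fin k) (Fin (n - k)) F) :
    finrank F (rowSpace F (concatIA F hk A)) = k := by
  rw [rowSpace_eq_range_vecMulLinear,
    LinearMap.finrank_range_of_inj (vecMulLinear_concatIA_injective hk A), finrank_fin_fun]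

theorem rowSpace_concatIA_inf (A B : Matrix (Fin k) (Fin (n - k)) F) :
    rowSpace F (concatIA F hk A) ⊓ rowSpace F (concatIA F hk B) =
      (LinearMap.ker (A - B).vecMulLinear).map (concatIA F hk A).vecMulLinear := by
  ext y
  simp only [rowSpace_eq_range_vecMulLinear, Submodule.mem_inf, Submodule.mem_map,
    LinearMap.mem_range, LinearMap.mem_ker, vecMulLinear_apply, vecMul_sub, sub_eq_zero]
  constructor
  · rintro ⟨⟨x, rfl⟩, z, hz⟩
    obtain ⟨rfl, hAB⟩ := (vecMul_concatIA_eq_iff hk B A z x).mp hz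
    exact ⟨z, hAB.symm, rfl⟩
  · rintro ⟨x, hAB, rfl⟩
    exact ⟨⟨x, rfl⟩, x, (vecMul_concatIA_eq_iff hk B A x x).mpr ⟨rfl, hAB.symm⟩⟩

theorem finrank_rowSpace_concatIA_inf (A B : Matrix (Fin k) (Fin (n - k)) F) :
    finrank F ↥(rowSpace F (concatIA F hk A) ⊓ rowSpace F (concatIA F hk B)) =
      finrank F (LinearMap.ker (A - B).vecMulLinear) := by
  rw [rowSpace_concatIA_inf]
  exact (Submodule.equivMapOfInjective _ (vecMulLinear_concatIA_injective hk A) _).finrank_eq.symm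

end ConcatIA

theorem statement1_general (n k : ℕ) (hk : k ≤ n)
    (F : Type*) [Field F]
    (A B : Matrix (Fin k) (Fin (n - k)) F)
    (U W : Submodule F (Fin n → F))
    (hU : U = rowSpace F (concatIA F hk A))
    (hW : W = rowSpace F (concatIA F hk B)) :
    Module.finrank F ↥U = k ∧ Module.finrank F ↥W = k ∧
      subspaceDist F U W = 2 * (A - B).rank := by
  subst hU hW
  refine ⟨finrank_rowSpace_concatIA hk A, finrank_rowSpace_concatIA hk B, ?_⟩
  have rank_nullity := (A - B).rank_add_finrank_ker_vecMulLinear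
  rw [Fintype.card_fin] at rank_nullity
  rw [subspaceDist, finrank_rowSpace_concatIA hk A, finrank_rowSpace_concatIA hk B,
    finrank_rowSpace_concatIA_inf hk A B]
  omega

theorem statement1 (q n k : ℕ) (hq : IsPrimePow q) (hk : k ≤ n)
    (F : Type*) [Field F] [Fintype F] (hF : Fintype.card F = q)
    (A B : Matrix (Fin k) (Fin (n - k)) F)
    (U W : Submodule F (Fin n → F))
    (hU : U = rowSpace F (concatIA F hk A))
    (hW : W = rowSpace F (concatIA F hk B)) :
    Module.finrank F ↥U = k ∧ Module.finrank F ↥W = k ∧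
      subspaceDist F U W = 2 * (A - B).rank :=
  statement1_general n k hk F A B U W hU hW
end

section
/- Let q be a prime power, k and n integers with 2 ≤ 2k ≤ n, and d an even integer with 2 ≤ d ≤ 2k. Then there exists an (n, q^{(n−k)(k−d/2+1)}, d, k)_q constant dimension code; that is, there is a set of q^{(n−k)(k−d/2+1)} k-dimensional subspaces of 𝔽_q^n such that any two distinct members U, W satisfy d_S(U,W) ≥ d. -/
open Polynomial Module

section LinearizedPolynomial

variable {F K : Type*} [Field F] [Fintype F] [Field K] [Algebra F K]

variable (F) in
def linearizedMap (s : ℕ) (c : Fin (s + 1) → K) : K →ₗ[F] K :=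
  ∑ i, c i • (FiniteField.frobeniusAlgHom F K ^ (i : ℕ)).toLinearMap

theorem linearizedMap_apply (s : ℕ) (c : Fin (s + 1) → K) (x : K) :
    linearizedMap F s c x = ∑ i, c i * x ^ Fintype.card F ^ (i : ℕ) := by
  simp [linearizedMap, FiniteField.coe_frobeniusAlgHom, AlgHom.coe_pow, pow_iterate]

theorem linearizedMap_sub (s : ℕ) (c₁ c₂ : Fin (s + 1) → K) :
    linearizedMap F s (c₁ - c₂) = linearizedMap F s c₁ - linearizedMap F s c₂ := by
  ext x
  simp [linearizedMap_apply, sub_mul]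

variable (K) in
noncomputable def linearizedPoly (q s : ℕ) (c : Fin (s + 1) → K) : K[X] :=
  ∑ i, C (c i) * X ^ q ^ (i : ℕ)

theorem coeff_linearizedPoly {q s : ℕ} (hq : 1 < q) (c : Fin (s + 1) → K) (i : Fin (s + 1)) :
    (linearizedPoly K q s c).coeff (q ^ (i : ℕ)) = c i := by
  simp [linearizedPoly, coeff_X_pow, (Nat.pow_right_injective hq).eq_iff, Fin.val_inj]

theorem natDegree_linearizedPoly_le {q : ℕ} (hq : 1 ≤ q) (s : ℕ) (c : Fin (s + 1) → K) :
    (linearizedPoly K q s c).natDegree ≤ q ^ s := by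
  refine natDegree_sum_le_of_forall_le _ _ fun i _ => (natDegree_C_mul_le _ _).trans ?_
  rw [natDegree_X_pow]
  exact Nat.pow_le_pow_right hq (Fin.is_le i)

theorem eval_linearizedPoly (s : ℕ) (c : Fin (s + 1) → K) (x : K) :
    (linearizedPoly K (Fintype.card F) s c).eval x = linearizedMap F s c x := by
  simp [linearizedPoly, linearizedMap_apply, eval_finsetSum]

theorem finrank_ker_linearizedMap_le [FiniteDimensional F K] (s : ℕ) {c : Fin (s + 1) → K}
    (hc : c ≠ 0) : finrank F (LinearMap.ker (linearizedMap F s c)) ≤ s := by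
  have hq : 1 < Fintype.card F := Fintype.one_lt_card
  set P := linearizedPoly K (Fintype.card F) s c
  have hP : P ≠ 0 := by
    obtain ⟨i, hi⟩ := Function.ne_iff.mp hc
    exact ne_of_apply_ne (coeff · (Fintype.card F ^ (i : ℕ)))
      (by simpa [P, coeff_linearizedPoly hq] using hi)
  have hker : (LinearMap.ker (linearizedMap F s c) : Set K) ⊆ P.rootSet K := fun x hx => by
    rw [mem_rootSet_of_ne hP, aeval_def, Algebra.algebraMap_self, eval₂_id, eval_linearizedPoly]
    exact hx
  have hcard : Fintype.card F ^ finrank F (LinearMap.ker (linearizedMap F s c)) ≤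
      Fintype.card F ^ s :=
    calc _ = Nat.card (LinearMap.ker (linearizedMap F s c)) := by
            rw [natCard_eq_pow_finrank (K := F), Nat.card_eq_fintype_card]
      _ ≤ (P.rootSet K).ncard := by
            rw [← Nat.card_coe_set_eq]
            exact Set.ncard_le_ncard hker (P.rootSet_finite K)
      _ ≤ P.natDegree := P.ncard_rootSet_le K
      _ ≤ _ := natDegree_linearizedPoly_le hq.le s c
  exact (Nat.pow_le_pow_iff_right hq).mp hcard

end LinearizedPolynomial

section Lifting

variable {F V W : Type*} [Field F] [AddCommGroup V] [Module F V] [AddCommGroup W] [Module F W]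

theorem LinearMap.injective_id_prod (f : V →ₗ[F] W) :
    Function.Injective (LinearMap.id.prod f) :=
  fun _ _ h => congrArg Prod.fst h

theorem LinearMap.graph_inf_graph (f g : V →ₗ[F] W) :
    f.graph ⊓ g.graph = (LinearMap.ker (f - g)).map (LinearMap.id.prod f) := by
  ext ⟨a, b⟩
  simp only [Submodule.mem_inf, LinearMap.mem_graph_iff, Submodule.mem_map, LinearMap.mem_ker,
    LinearMap.sub_apply, sub_eq_zero, LinearMap.prod_apply, Function.prod_apply, LinearMap.id_apply,
    Prod.mk.injEq]
  constructor
  · rintro ⟨rfl, hg⟩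
    exact ⟨a, hg, rfl, rfl⟩
  · rintro ⟨a, hfg, rfl, rfl⟩
    exact ⟨rfl, hfg⟩

theorem LinearMap.finrank_graph (f : V →ₗ[F] W) : finrank F f.graph = finrank F V := by
  rw [LinearMap.graph_eq_range_prod, LinearMap.finrank_range_of_inj f.injective_id_prod]

theorem LinearMap.finrank_graph_inf_graph (f g : V →ₗ[F] W) :
    finrank F ↥(f.graph ⊓ g.graph) = finrank F (LinearMap.ker (f - g)) := by
  rw [f.graph_inf_graph]
  exact (Submodule.equivMapOfInjective _ f.injective_id_prod _).finrank_eq.symm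

theorem subspaceDist_map_graph [FiniteDimensional F V] {n : ℕ} (e : (V × W) ≃ₗ[F] (Fin n → F))
    (f g : V →ₗ[F] W) :
    subspaceDist F (f.graph.map e.toLinearMap) (g.graph.map e.toLinearMap) =
      2 * finrank F (LinearMap.range (f - g)) := by
  have hrank := (f - g).finrank_range_add_finrank_ker
  rw [subspaceDist, ← Submodule.map_inf _ e.injective, LinearEquiv.finrank_map_eq,
    LinearEquiv.finrank_map_eq, LinearEquiv.finrank_map_eq, f.finrank_graph, g.finrank_graph,
    f.finrank_graph_inf_graph]
  omega

end Lifting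

def IsConstDimCode (F : Type*) [Field F] {n : ℕ} (k d : ℕ)
    (C : Finset (Submodule F (Fin n → F))) : Prop :=
  (∀ U ∈ C, finrank F U = k) ∧ ∀ U ∈ C, ∀ W ∈ C, U ≠ W → d ≤ subspaceDist F U W

theorem exists_isConstDimCode_of_le_finrank_range {F V W ι : Type*} [Field F] [AddCommGroup V]
    [Module F V] [AddCommGroup W] [Module F W] [FiniteDimensional F V] [FiniteDimensional F W]
    [Fintype ι] {n δ : ℕ} (hn : finrank F V + finrank F W = n) (hδ : 0 < δ)
    (f : ι → V →ₗ[F] W) (hf : ∀ i j, i ≠ j → δ ≤ finrank F (LinearMap.range (f i - f j))) :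
    ∃ C : Finset (Submodule F (Fin n → F)),
      C.card = Fintype.card ι ∧ IsConstDimCode F (finrank F V) (2 * δ) C := by
  classical
  let e : (V × W) ≃ₗ[F] (Fin n → F) :=
    LinearEquiv.ofFinrankEq _ _ (by rw [finrank_prod, hn, finrank_fin_fun])
  let U : ι → Submodule F (Fin n → F) := fun i => (f i).graph.map e.toLinearMap
  have hU : ∀ i j, i ≠ j → 2 * δ ≤ subspaceDist F (U i) (U j) := fun i j hij =>
    (subspaceDist_map_graph e (f i) (f j)).symm ▸ Nat.mul_le_mul_left 2 (hf i j hij)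
  have hU_inj : Function.Injective U := by
    intro i j hij
    by_contra hne
    have := hU i j hne
    rw [hij, subspaceDist_map_graph, sub_self, LinearMap.range_zero, finrank_bot] at this
    omega
  refine ⟨Finset.univ.image U, by rw [Finset.card_image_of_injective _ hU_inj, Finset.card_univ],
    ?_, ?_⟩
  · simp only [Finset.mem_image, Finset.mem_univ, true_and]
    rintro _ ⟨i, rfl⟩
    rw [LinearEquiv.finrank_map_eq, LinearMap.finrank_graph]
  · simp only [Finset.mem_image, Finset.mem_univ, true_and]
    rintro _ ⟨i, rfl⟩ _ ⟨j, rfl⟩ hij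
    exact hU i j (fun h => hij (h ▸ rfl))

theorem LinearMap.finrank_ker_comp_le_of_injective {F U V W : Type*} [Field F] [AddCommGroup U]
    [Module F U] [AddCommGroup V] [Module F V] [AddCommGroup W] [Module F W]
    [FiniteDimensional F W] (g : W →ₗ[F] U) {ι : V →ₗ[F] W} (hι : Function.Injective ι) :
    finrank F (LinearMap.ker (g ∘ₗ ι)) ≤ finrank F (LinearMap.ker g) := by
  rw [LinearMap.ker_comp]
  exact (Submodule.equivMapOfInjective ι hι _).finrank_eq.trans_le
    (Submodule.finrank_mono (Submodule.map_comap_le _ _))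

theorem sub_le_finrank_range_linearizedMap_comp {F K V : Type*} [Field F] [Fintype F] [Field K]
    [Algebra F K] [FiniteDimensional F K] [AddCommGroup V] [Module F V] [FiniteDimensional F V]
    {ι : V →ₗ[F] K} (hι : Function.Injective ι) (s : ℕ) {c : Fin (s + 1) → K} (hc : c ≠ 0) :
    finrank F V - s ≤ finrank F (LinearMap.range (linearizedMap F s c ∘ₗ ι)) := by
  have hrank := (linearizedMap F s c ∘ₗ ι).finrank_range_add_finrank_ker
  have hker := (linearizedMap F s c).finrank_ker_comp_le_of_injective hι
  have := finrank_ker_linearizedMap_le (F := F) s hc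
  omega

theorem statement2_general (q n k d : ℕ) (hkn : 2 * k ≤ n)
    (hd : 2 ≤ d) (hdk : d ≤ 2 * k) (hde : Even d)
    (F : Type*) [Field F] [Fintype F] (hF : Fintype.card F = q) :
    ∃ C : Finset (Submodule F (Fin n → F)),
      C.card = q ^ ((n - k) * (k - d / 2 + 1)) ∧
      (∀ U ∈ C, Module.finrank F ↥U = k) ∧
      (∀ U ∈ C, ∀ W ∈ C, U ≠ W → d ≤ subspaceDist F U W) := by
  obtain ⟨δ, rfl⟩ := hde.two_dvd
  obtain ⟨p, _⟩ := CharP.exists F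
  have : Fact p.Prime := ⟨(FiniteField.card F p).choose_spec.1⟩
  have : NeZero (n - k) := ⟨by omega⟩
  let K := FiniteField.Extension F p (n - k)
  have : Fintype K := Fintype.ofFinite K
  have hK : finrank F K = n - k := FiniteField.finrank_extension F p (n - k)
  obtain ⟨ι, hι⟩ := finrank_le_iff_exists_linearMap.mp
    (show finrank F (Fin k → F) ≤ finrank F K by rw [hK, finrank_fin_fun]; omega)
  obtain ⟨C, hcard, hC⟩ := exists_isConstDimCode_of_le_finrank_range (n := n) (δ := δ)
    (by rw [finrank_fin_fun, hK]; omega) (by omega)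
    (fun c : Fin (k - δ + 1) → K => linearizedMap F _ c ∘ₗ ι) fun c₁ c₂ hne => by
      have := sub_le_finrank_range_linearizedMap_comp hι _ (sub_ne_zero.mpr hne)
      rw [finrank_fin_fun] at this
      rw [← LinearMap.sub_comp, ← linearizedMap_sub]
      omega
  have hcardK : Fintype.card K = q ^ (n - k) := by
    rw [Fintype.card_eq_nat_card, FiniteField.natCard_extension, Nat.card_eq_fintype_card, hF]
  rw [finrank_fin_fun] at hC
  refine ⟨C, ?_, hC⟩
  rw [hcard, Fintype.card_fun, Fintype.card_fin, hcardK, ← pow_mul,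
    Nat.mul_div_cancel_left δ two_pos]

theorem statement2 (q n k d : ℕ) (hq : IsPrimePow q)
    (hk : 2 ≤ 2 * k) (hkn : 2 * k ≤ n)
    (hd : 2 ≤ d) (hdk : d ≤ 2 * k) (hde : Even d)
    (F : Type*) [Field F] [Fintype F] (hF : Fintype.card F = q) :
    ∃ C : Finset (Submodule F (Fin n → F)),
      C.card = q ^ ((n - k) * (k - d / 2 + 1)) ∧
      (∀ U ∈ C, Module.finrank F ↥U = k) ∧
      (∀ U ∈ C, ∀ W ∈ C, U ≠ W → d ≤ subspaceDist F U W) :=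
  statement2_general q n k d hkn hd hdk hde F hF
end

section
/- (Combination lemma for linkage-type constructions.) Let q be a prime power, d an even integer with 2 ≤ d ≤ 2k, and 0 ≤ Δ < n. Let 𝒞_1 be an (n, N_1, d, k)_q constant dimension code all of whose members are contained in the span of the first n−Δ standard basis vectors of 𝔽_q^n, and let 𝒞_2 be an (n, N_2, d, k)_q constant dimension code all of whose members W satisfy dim(π_{n−Δ}(W)) ≤ k − d/2, where π_{n−Δ} is the projection onto the first n−Δ coordinates. Then 𝒞_1 and 𝒞_2 are disjoint and 𝒞_1 ∪ 𝒞_2 is an (n, N_1 + N_2, d, k)_q constant dimension code. -/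
/-!
A member `U` of `C₁` is fixed pointwise by `π_{n-Δ}`, so `U ∩ W ⊆ π_{n-Δ}(W)` for every `W`.
For `W ∈ C₂` this gives `dim (U ∩ W) ≤ k - d/2`, hence `d_S(U, W) ≥ d`; for `W = U` it would give
`k ≤ k - d/2`, so no subspace lies in both codes.
-/

open scoped Classical

def IsConstantDimCode (F : Type*) [Field F] {n : ℕ} (k d : ℕ)
    (C : Finset (Submodule F (Fin n → F))) : Prop :=
  (∀ U ∈ C, Module.finrank F U = k) ∧ ∀ U ∈ C, ∀ W ∈ C, U ≠ W → d ≤ subspaceDist F U W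

section

variable {F : Type*} [Field F] {n : ℕ}

lemma zeroProj_eq_self {i : ℕ} {x : Fin n → F} (hx : ∀ j : Fin n, i ≤ (j : ℕ) → x j = 0) :
    zeroProj F n i x = x := by
  funext j
  by_cases h : (j : ℕ) < i
  · simp [zeroProj, h]
  · simp [zeroProj, h, hx j (not_lt.1 h)]

lemma finrank_inf_le_projDim {i : ℕ} {U W : Submodule F (Fin n → F)}
    (hU : ∀ x ∈ U, ∀ j : Fin n, i ≤ (j : ℕ) → x j = 0) :
    Module.finrank F ↥(U ⊓ W) ≤ projDim F W i :=
  Submodule.finrank_mono fun x hx => ⟨x, hx.2, zeroProj_eq_self (hU x hx.1)⟩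

lemma finrank_le_projDim {i : ℕ} {U : Submodule F (Fin n → F)}
    (hU : ∀ x ∈ U, ∀ j : Fin n, i ≤ (j : ℕ) → x j = 0) :
    Module.finrank F U ≤ projDim F U i := by
  have h := finrank_inf_le_projDim (W := U) hU
  rwa [inf_idem] at h

lemma subspaceDist_comm (U W : Submodule F (Fin n → F)) :
    subspaceDist F U W = subspaceDist F W U := by
  rw [subspaceDist, subspaceDist, inf_comm, add_comm]

lemma le_subspaceDist_of_finrank_inf_le {k d : ℕ} {U W : Submodule F (Fin n → F)}
    (hU : Module.finrank F U = k) (hW : Module.finrank F W = k) (hde : Even d) (hdk : d ≤ 2 * k)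
    (hUW : Module.finrank F ↥(U ⊓ W) ≤ k - d / 2) : d ≤ subspaceDist F U W := by
  obtain ⟨r, rfl⟩ := hde
  rw [subspaceDist, hU, hW]
  omega

lemma IsConstantDimCode.union {k d : ℕ} {C₁ C₂ : Finset (Submodule F (Fin n → F))}
    (h₁ : IsConstantDimCode F k d C₁) (h₂ : IsConstantDimCode F k d C₂)
    (hcross : ∀ U ∈ C₁, ∀ W ∈ C₂, d ≤ subspaceDist F U W) :
    IsConstantDimCode F k d (C₁ ∪ C₂) := by
  refine ⟨fun U hU => (Finset.mem_union.1 hU).elim (h₁.1 U) (h₂.1 U), ?_⟩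
  intro U hU W hW hne
  rcases Finset.mem_union.1 hU with hU | hU <;> rcases Finset.mem_union.1 hW with hW | hW
  · exact h₁.2 U hU W hW hne
  · exact hcross U hU W hW
  · exact subspaceDist_comm U W ▸ hcross W hW U hU
  · exact h₂.2 U hU W hW hne

end

theorem statement7_general (n k d Δ N₁ N₂ : ℕ)
    (hd : 2 ≤ d) (hdk : d ≤ 2 * k) (hde : Even d)
    (F : Type*) [Field F]
    (C₁ C₂ : Finset (Submodule F (Fin n → F)))
    (hcard₁ : C₁.card = N₁)
    (hdim₁ : ∀ U ∈ C₁, Module.finrank F ↥U = k)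
    (hdist₁ : ∀ U ∈ C₁, ∀ W ∈ C₁, U ≠ W → d ≤ subspaceDist F U W)
    (hsupp₁ : ∀ U ∈ C₁, ∀ x ∈ U, ∀ j : Fin n, n - Δ ≤ (j : ℕ) → x j = 0)
    (hcard₂ : C₂.card = N₂)
    (hdim₂ : ∀ W ∈ C₂, Module.finrank F ↥W = k)
    (hdist₂ : ∀ U ∈ C₂, ∀ W ∈ C₂, U ≠ W → d ≤ subspaceDist F U W)
    (hproj₂ : ∀ W ∈ C₂, projDim F W (n - Δ) ≤ k - d / 2) :
    Disjoint C₁ C₂ ∧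
    (C₁ ∪ C₂).card = N₁ + N₂ ∧
    (∀ U ∈ C₁ ∪ C₂, Module.finrank F ↥U = k) ∧
    (∀ U ∈ C₁ ∪ C₂, ∀ W ∈ C₁ ∪ C₂, U ≠ W → d ≤ subspaceDist F U W) := by
  have hdisj : Disjoint C₁ C₂ := Finset.disjoint_left.2 fun U hU₁ hU₂ => by
    have hle := (finrank_le_projDim (hsupp₁ U hU₁)).trans (hproj₂ U hU₂)
    rw [hdim₁ U hU₁] at hle
    omega
  have hcross : ∀ U ∈ C₁, ∀ W ∈ C₂, d ≤ subspaceDist F U W := fun U hU W hW =>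
    le_subspaceDist_of_finrank_inf_le (hdim₁ U hU) (hdim₂ W hW) hde hdk
      ((finrank_inf_le_projDim (hsupp₁ U hU)).trans (hproj₂ W hW))
  obtain ⟨hdim, hdist⟩ := IsConstantDimCode.union ⟨hdim₁, hdist₁⟩ ⟨hdim₂, hdist₂⟩ hcross
  exact ⟨hdisj, by rw [Finset.card_union_of_disjoint hdisj, hcard₁, hcard₂], hdim, hdist⟩

theorem statement7 (q n k d Δ N₁ N₂ : ℕ) (hq : IsPrimePow q)
    (hd : 2 ≤ d) (hdk : d ≤ 2 * k) (hde : Even d) (hΔn : Δ < n)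
    (F : Type*) [Field F] [Fintype F] (hF : Fintype.card F = q)
    (C₁ C₂ : Finset (Submodule F (Fin n → F)))
    (hcard₁ : C₁.card = N₁)
    (hdim₁ : ∀ U ∈ C₁, Module.finrank F ↥U = k)
    (hdist₁ : ∀ U ∈ C₁, ∀ W ∈ C₁, U ≠ W → d ≤ subspaceDist F U W)
    (hsupp₁ : ∀ U ∈ C₁, ∀ x ∈ U, ∀ j : Fin n, n - Δ ≤ (j : ℕ) → x j = 0)
    (hcard₂ : C₂.card = N₂)
    (hdim₂ : ∀ W ∈ C₂, Module.finrank F ↥W = k)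
    (hdist₂ : ∀ U ∈ C₂, ∀ W ∈ C₂, U ≠ W → d ≤ subspaceDist F U W)
    (hproj₂ : ∀ W ∈ C₂, projDim F W (n - Δ) ≤ k - d / 2) :
    Disjoint C₁ C₂ ∧
    (C₁ ∪ C₂).card = N₁ + N₂ ∧
    (∀ U ∈ C₁ ∪ C₂, Module.finrank F ↥U = k) ∧
    (∀ U ∈ C₁ ∪ C₂, ∀ W ∈ C₁ ∪ C₂, U ≠ W → d ≤ subspaceDist F U W) :=
  statement7_general n k d Δ N₁ N₂ hd hdk hde F C₁ C₂ hcard₁ hdim₁ hdist₁ hsupp₁ hcard₂ hdim₂ hdist₂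
    hproj₂
end

section
/- Let q be a prime power. If there exists a (7, N, 4, 3)_q constant dimension code, then there exists an (11, q^8·N + q^4 + q^3 + 2q^2 + q + 1, 4, 3)_q constant dimension code; that is, A_q(11,4;3) ≥ q^8·A_q(7,4;3) + q^4 + q^3 + 2q^2 + q + 1. -/
open Module Polynomial

namespace SubspaceCode

section LinearAlgebra

variable {F E U V : Type*} [Field F] [AddCommGroup E] [Module F E] [AddCommGroup U] [Module F U]
  [AddCommGroup V] [Module F V]

theorem finrank_comap_le_of_injective [FiniteDimensional F V] {j : E →ₗ[F] V}
    (hj : Function.Injective j) (S : Submodule F V) : finrank F (S.comap j) ≤ finrank F S :=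
  ((S.comap j).equivMapOfInjective j hj).finrank_eq.trans_le
    (Submodule.finrank_mono (Submodule.map_comap_le j S))

theorem exists_injective_of_finrank_le [FiniteDimensional F E] (h : finrank F E ≤ finrank F V) :
    ∃ j : E →ₗ[F] V, Function.Injective j := by
  obtain ⟨f, hf⟩ := exists_linearIndependent_of_le_finrank h
  exact ⟨(finBasis F E).constr F f, (finBasis F E).injective_constr_of_linearIndependent hf⟩

theorem exists_injective_range_eq [FiniteDimensional F E] {W : Submodule F U}
    [FiniteDimensional F W] (h : finrank F E = finrank F W) :
    ∃ g : E →ₗ[F] U, Function.Injective g ∧ LinearMap.range g = W :=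
  let e := LinearEquiv.ofFinrankEq E W h
  ⟨W.subtype ∘ₗ e, W.subtype_injective.comp e.injective, by
    rw [LinearMap.range_comp, LinearEquiv.range, Submodule.map_top, Submodule.range_subtype]⟩

theorem _root_.Submodule.finrank_prod [FiniteDimensional F U] [FiniteDimensional F V]
    (p : Submodule F U) (p' : Submodule F V) :
    finrank F (p.prod p') = finrank F p + finrank F p' := by
  have := LinearMap.finrank_range_of_inj (f := p.subtype.prodMap p'.subtype)
    (Prod.map_injective.mpr ⟨p.subtype_injective, p'.subtype_injective⟩)
  rwa [LinearMap.range_prodMap, p.range_subtype, p'.range_subtype, Module.finrank_prod] at this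

theorem finrank_inf_add_le_of_disjoint [FiniteDimensional F U] {S T B : Submodule F U}
    (hBT : B ≤ T) (hSB : Disjoint S B) :
    finrank F (S ⊓ T : Submodule F U) + finrank F B ≤ finrank F T := by
  have := Submodule.finrank_sup_add_finrank_inf_eq (S ⊓ T) B
  rw [(hSB.mono_left inf_le_left).eq_bot, finrank_bot] at this
  have := Submodule.finrank_mono (sup_le inf_le_right hBT : S ⊓ T ⊔ B ≤ T)
  omega

theorem finrank_inf_lt_of_ne [FiniteDimensional F U] {S T : Submodule F U} {m : ℕ}
    (hS : finrank F S = m) (hT : finrank F T = m) (hST : S ≠ T) :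
    finrank F (S ⊓ T : Submodule F U) < m := by
  by_contra! h
  exact hST <| (Submodule.eq_of_le_of_finrank_le inf_le_left (hS ▸ h)).symm.trans
    (Submodule.eq_of_le_of_finrank_le inf_le_right (hT ▸ h))

end LinearAlgebra

section Counting

variable {F V : Type*} [Field F] [AddCommGroup V] [Module F V]

instance [Finite V] : Finite (Submodule F V) := Finite.of_injective _ SetLike.coe_injective

variable (F V) in
noncomputable def numSubspaces (k : ℕ) : ℕ := Nat.card {W : Submodule F V // finrank F W = k}

theorem numSubspaces_congr {V' : Type*} [AddCommGroup V'] [Module F V'] (e : V ≃ₗ[F] V')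
    (k : ℕ) : numSubspaces F V k = numSubspaces F V' k :=
  Nat.card_congr <| (Submodule.orderIsoMapComap e).toEquiv.subtypeEquiv fun W ↦ by
    change _ ↔ finrank F (W.map (e : V →ₗ[F] V')) = k
    rw [LinearEquiv.finrank_map_eq]

theorem numSubspaces_eq_of_finrank_eq [FiniteDimensional F V] {n : ℕ} (h : finrank F V = n)
    (k : ℕ) : numSubspaces F V k = numSubspaces F (Fin n → F) k :=
  numSubspaces_congr (LinearEquiv.ofFinrankEq V (Fin n → F) (by simpa using h)) k

theorem numSubspaces_zero_pos [Finite F] [FiniteDimensional F V] : 0 < numSubspaces F V 0 := by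
  have : Finite V := Module.finite_of_finite F
  exact Nat.card_pos_iff.mpr ⟨⟨⟨⊥, finrank_bot F V⟩⟩, inferInstance⟩

def graphMod (P : Submodule F V) (c : V ⧸ P) : Submodule F (F × V) :=
  LinearMap.ker
    (P.mkQ ∘ₗ LinearMap.snd F F V - LinearMap.toSpanSingleton F _ c ∘ₗ LinearMap.fst F F V)

theorem mem_graphMod {P : Submodule F V} {c : V ⧸ P} {x : F × V} :
    x ∈ graphMod P c ↔ P.mkQ x.2 = x.1 • c := by
  simp [graphMod, sub_eq_zero]

theorem finrank_graphMod [FiniteDimensional F V] (P : Submodule F V) (c : V ⧸ P) :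
    finrank F (graphMod P c) = finrank F P + 1 := by
  set f :=
    P.mkQ ∘ₗ LinearMap.snd F F V - LinearMap.toSpanSingleton F _ c ∘ₗ LinearMap.fst F F V
  have hf : LinearMap.range f = ⊤ := LinearMap.range_eq_top.mpr fun y ↦ by
    obtain ⟨v, rfl⟩ := P.mkQ_surjective y
    exact ⟨(0, v), by simp [f]⟩
  have hrank := LinearMap.finrank_range_add_finrank_ker f
  rw [hf, finrank_top, finrank_prod, finrank_self] at hrank
  have := P.finrank_quotient_add_finrank
  change finrank F (LinearMap.ker f) = _
  omega

theorem comap_inr_graphMod (P : Submodule F V) (c : V ⧸ P) :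
    (graphMod P c).comap (LinearMap.inr F F V) = P := by
  ext v
  simp [mem_graphMod]

theorem graphMod_injective {P : Submodule F V} : Function.Injective (graphMod P) := by
  intro c c' h
  obtain ⟨v, rfl⟩ := P.mkQ_surjective c
  have hv : ((1 : F), v) ∈ graphMod P c' := h ▸ mem_graphMod.mpr (by simp)
  simpa [mem_graphMod] using hv

theorem map_inr_ne_graphMod (W P : Submodule F V) (c : V ⧸ P) :
    W.map (LinearMap.inr F F V) ≠ graphMod P c := by
  intro h
  obtain ⟨v, rfl⟩ := P.mkQ_surjective c
  obtain ⟨w, -, hw⟩ : ((1 : F), v) ∈ W.map (LinearMap.inr F F V) :=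
    h ▸ mem_graphMod.mpr (by simp)
  simpa using congrArg Prod.fst hw

def extendSubspace [FiniteDimensional F V] (k : ℕ) :
    {W : Submodule F V // finrank F W = k + 1} ⊕
      (Σ P : {P : Submodule F V // finrank F P = k}, V ⧸ P.1) →
      {W : Submodule F (F × V) // finrank F W = k + 1}
  | .inl W => ⟨W.1.map (LinearMap.inr F F V),
      (W.1.equivMapOfInjective _ LinearMap.inr_injective).finrank_eq.symm.trans W.2⟩
  | .inr ⟨P, c⟩ => ⟨graphMod P.1 c, by rw [finrank_graphMod, P.2]⟩

theorem extendSubspace_injective [FiniteDimensional F V] (k : ℕ) :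
    Function.Injective (extendSubspace (F := F) (V := V) k) := by
  rintro (W | ⟨P, c⟩) (W' | ⟨P', c'⟩) h <;>
    simp only [extendSubspace, Subtype.mk.injEq] at h
  · exact congrArg Sum.inl
      (Subtype.ext (Submodule.map_injective_of_injective LinearMap.inr_injective h))
  · exact absurd h (map_inr_ne_graphMod _ _ _)
  · exact absurd h.symm (map_inr_ne_graphMod _ _ _)
  · obtain rfl : P = P' :=
      Subtype.ext (by rw [← comap_inr_graphMod P.1 c, h, comap_inr_graphMod])
    rw [graphMod_injective h]

theorem numSubspaces_add_le_numSubspaces_prod [Finite F] [FiniteDimensional F V]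
    (k : ℕ) :
    numSubspaces F V (k + 1) + numSubspaces F V k * Nat.card F ^ (finrank F V - k) ≤
      numSubspaces F (F × V) (k + 1) := by
  have : Finite V := Module.finite_of_finite F
  have : ∀ P : Submodule F V, Finite (V ⧸ P) := fun P ↦ Module.finite_of_finite F
  have := Fintype.ofFinite {P : Submodule F V // finrank F P = k}
  have hfib (P : {P : Submodule F V // finrank F P = k}) :
      Nat.card (V ⧸ P.1) = Nat.card F ^ (finrank F V - k) := by
    rw [natCard_eq_pow_finrank (K := F), ← P.1.finrank_quotient_add_finrank, P.2,
      Nat.add_sub_cancel]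
  have := Nat.card_le_card_of_injective _ (extendSubspace_injective (F := F) (V := V) k)
  rwa [Nat.card_sum, Nat.card_sigma, Finset.sum_congr rfl fun P _ ↦ hfib P, Finset.sum_const,
    Finset.card_univ, smul_eq_mul, ← Nat.card_eq_fintype_card] at this

theorem numSubspaces_fin_succ [Finite F] (n k : ℕ) :
    numSubspaces F (Fin n → F) (k + 1) + numSubspaces F (Fin n → F) k * Nat.card F ^ (n - k) ≤
      numSubspaces F (Fin (n + 1) → F) (k + 1) := by
  have h := numSubspaces_add_le_numSubspaces_prod (F := F) (V := Fin n → F) k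
  rwa [finrank_fin_fun, numSubspaces_eq_of_finrank_eq (V := F × (Fin n → F)) (n := n + 1)
    (by simp [add_comm])] at h

theorem le_numSubspaces_two_of_finrank_eq_four [Finite F] [FiniteDimensional F V] {q : ℕ}
    (hq : Nat.card F = q) (h : finrank F V = 4) :
    q ^ 4 + q ^ 3 + 2 * q ^ 2 + q + 1 ≤ numSubspaces F V 2 := by
  rw [numSubspaces_eq_of_finrank_eq h]
  have h11 := numSubspaces_fin_succ (F := F) 0 0
  have h21 := numSubspaces_fin_succ (F := F) 1 0
  have h22 := numSubspaces_fin_succ (F := F) 1 1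
  have h31 := numSubspaces_fin_succ (F := F) 2 0
  have h32 := numSubspaces_fin_succ (F := F) 2 1
  have h42 := numSubspaces_fin_succ (F := F) 3 1
  have h00 := numSubspaces_zero_pos (F := F) (V := Fin 0 → F)
  have h10 := numSubspaces_zero_pos (F := F) (V := Fin 1 → F)
  have h20 := numSubspaces_zero_pos (F := F) (V := Fin 2 → F)
  rw [hq] at h11 h21 h22 h31 h32 h42
  norm_num at h11 h21 h22 h31 h32 h42
  have g21 : 1 + q ≤ numSubspaces F (Fin 2 → F) 1 := by nlinarith
  have g31 : 1 + q + q ^ 2 ≤ numSubspaces F (Fin 3 → F) 1 := by nlinarith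
  have g32 : 1 + q + q ^ 2 ≤ numSubspaces F (Fin 3 → F) 2 := by nlinarith
  nlinarith

theorem le_natCard_projectivization_of_finrank_eq_seven [Finite F] {q : ℕ}
    (hq : Nat.card F = q) (h : finrank F V = 7) :
    q ^ 4 + q ^ 3 + 2 * q ^ 2 + q + 1 ≤ Nat.card (Projectivization F V) := by
  rw [Projectivization.card_of_finrank F V h, hq]
  have := pow_le_pow_right₀ (hq ▸ Nat.card_pos : 1 ≤ q) (by norm_num : 2 ≤ 5)
  simp only [Finset.sum_range_succ, Finset.sum_range_zero, pow_zero, pow_one]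
  linarith [Nat.zero_le (q ^ 6)]

theorem exists_injective_fin_of_le_natCard {α : Type*} [Finite α] {m : ℕ}
    (h : m ≤ Nat.card α) : ∃ f : Fin m → α, Function.Injective f := by
  have := Fintype.ofFinite α
  obtain ⟨f⟩ := Function.Embedding.nonempty_of_card_le (α := Fin m) (β := α)
    (by simpa [Nat.card_eq_fintype_card] using h)
  exact ⟨f, f.injective⟩

end Counting

section Gabidulin

variable {F K : Type*} [Field F] [Fintype F] [Field K] [Algebra F K]

noncomputable def gabidulin (a : K × K) : K →ₗ[F] K :=
  LinearMap.mulLeft F a.1 +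
    LinearMap.mulLeft F a.2 ∘ₗ (FiniteField.frobeniusAlgHom F K).toLinearMap

theorem gabidulin_apply (a : K × K) (x : K) :
    gabidulin (F := F) a x = a.1 * x + a.2 * x ^ Fintype.card F :=
  rfl

theorem gabidulin_sub (a b : K × K) :
    gabidulin (F := F) (a - b) = gabidulin a - gabidulin b := by
  ext x
  simp only [gabidulin_apply, LinearMap.sub_apply, Prod.fst_sub, Prod.snd_sub]
  ring

theorem finrank_ker_gabidulin_le_one [FiniteDimensional F K] {a : K × K} (ha : a ≠ 0) :
    finrank F (LinearMap.ker (gabidulin (F := F) a)) ≤ 1 := by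
  classical
  set q := Fintype.card F
  have hq : 1 < q := Fintype.one_lt_card
  -- the kernel consists of roots of `a.2 X^q + a.1 X`
  set P : K[X] := C a.2 * X ^ q + C a.1 * X
  have hP : P ≠ 0 := by
    intro h0
    have h1 : P.coeff 1 = a.1 := by simp [P, coeff_X_pow, hq.ne]
    have h2 : P.coeff q = a.2 := by simp [P, coeff_X, hq.ne]
    exact ha (Prod.ext (by simpa [h0] using h1.symm) (by simpa [h0] using h2.symm))
  have hdeg : P.natDegree ≤ q :=
    (natDegree_add_le _ _).trans <| max_le ((natDegree_C_mul_le _ _).trans (natDegree_X_pow_le _))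
      ((natDegree_C_mul_le _ _).trans (natDegree_X_le.trans hq.le))
  have hsub : (LinearMap.ker (gabidulin (F := F) a) : Set K) ⊆ P.roots.toFinset := by
    intro x hx
    rw [SetLike.mem_coe, LinearMap.mem_ker, gabidulin_apply] at hx
    rw [Finset.mem_coe, Multiset.mem_toFinset, mem_roots hP, IsRoot.def]
    simp only [P, eval_add, eval_mul, eval_C, eval_pow, eval_X]
    rw [← hx]
    ring
  have : Finite K := Module.finite_of_finite F
  have hcard : Nat.card (LinearMap.ker (gabidulin (F := F) a)) ≤ q := calc
    _ ≤ P.roots.toFinset.card := by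
      rw [← Set.ncard_coe_finset]
      exact (Nat.card_coe_set_eq _).trans_le <| Set.ncard_le_ncard hsub (Finset.finite_toSet _)
    _ ≤ P.natDegree := (Multiset.toFinset_card_le _).trans (card_roots' P)
    _ ≤ q := hdeg
  rw [natCard_eq_pow_finrank (K := F), Nat.card_eq_fintype_card] at hcard
  exact (Nat.pow_le_pow_iff_right hq).mp (by simpa using hcard)

theorem finrank_ker_gabidulin_comp_sub_le_one [FiniteDimensional F K] {E : Type*}
    [AddCommGroup E] [Module F E] {j : E →ₗ[F] K} (hj : Function.Injective j) {a b : K × K}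
    (hab : a ≠ b) :
    finrank F (LinearMap.ker (gabidulin a ∘ₗ j - gabidulin b ∘ₗ j)) ≤ 1 := by
  rw [← LinearMap.sub_comp, ← gabidulin_sub, LinearMap.ker_comp]
  exact (finrank_comap_le_of_injective hj _).trans
    (finrank_ker_gabidulin_le_one (sub_ne_zero.mpr hab))

end Gabidulin

section Lifting

variable {F E U V : Type*} [Field F] [AddCommGroup E] [Module F E] [AddCommGroup U] [Module F U]
  [AddCommGroup V] [Module F V] {g g' : E →ₗ[F] U} {D D' : E →ₗ[F] V}

theorem finrank_range_prod (hg : Function.Injective g) (D : E →ₗ[F] V) :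
    finrank F (LinearMap.range (g.prod D)) = finrank F E :=
  LinearMap.finrank_range_of_inj fun _ _ h ↦ hg (congrArg Prod.fst h)

theorem disjoint_range_prod (hg : Function.Injective g) (D : E →ₗ[F] V) :
    Disjoint (LinearMap.range (g.prod D)) ((⊥ : Submodule F U).prod ⊤) := by
  rw [Submodule.disjoint_def]
  rintro _ ⟨x, rfl⟩ ⟨hx, -⟩
  obtain rfl : x = 0 := hg (by simpa using hx)
  simp

theorem finrank_range_prod_inf_le_finrank_ker [FiniteDimensional F E]
    (hg : Function.Injective g) :
    finrank F (LinearMap.range (g.prod D) ⊓ LinearMap.range (g.prod D') : Submodule F _) ≤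
      finrank F (LinearMap.ker (D - D')) := by
  refine (Submodule.finrank_mono ?_).trans (Submodule.finrank_map_le (g.prod D) _)
  rintro _ ⟨⟨x, rfl⟩, ⟨y, hy⟩⟩
  rw [hg (congrArg Prod.fst hy)] at hy
  exact ⟨x, by simpa [sub_eq_zero] using (congrArg Prod.snd hy).symm, rfl⟩

theorem finrank_range_prod_inf_le_finrank_range_inf [FiniteDimensional F U]
    [FiniteDimensional F V] (hg : Function.Injective g) :
    finrank F (LinearMap.range (g.prod D) ⊓ LinearMap.range (g'.prod D') : Submodule F _) ≤
      finrank F (LinearMap.range g ⊓ LinearMap.range g' : Submodule F U) := by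
  set S := LinearMap.range (g.prod D) ⊓ LinearMap.range (g'.prod D')
  have hinj : Function.Injective ((LinearMap.fst F U V).domRestrict S) := by
    rintro ⟨_, ⟨a, rfl⟩, -⟩ ⟨_, ⟨b, rfl⟩, -⟩ (h : g a = g b)
    exact Subtype.ext (congrArg (g.prod D) (hg h))
  refine (LinearMap.finrank_range_of_inj hinj).symm.trans_le (Submodule.finrank_mono ?_)
  rintro _ ⟨⟨_, ⟨x, rfl⟩, y, hy⟩, rfl⟩
  exact ⟨⟨x, rfl⟩, y, by simpa using congrArg Prod.fst hy⟩

theorem finrank_range_prod_inf_prod_le_one [FiniteDimensional F U] [FiniteDimensional F V]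
    (hg : Function.Injective g) {P : Submodule F U} {L : Submodule F V} (hP : finrank F P = 1)
    (hL : finrank F L = 2) :
    finrank F (LinearMap.range (g.prod D) ⊓ P.prod L : Submodule F (U × V)) ≤ 1 := by
  have := finrank_inf_add_le_of_disjoint (Submodule.prod_mono (bot_le : ⊥ ≤ P) le_rfl)
    ((disjoint_range_prod hg D).mono_right (Submodule.prod_mono le_rfl (le_top : L ≤ ⊤)))
  rw [Submodule.finrank_prod, Submodule.finrank_prod, finrank_bot, hP, hL] at this
  omega

variable {κ A ι : Type*}

def liftedCode (g : κ → E →ₗ[F] U) (D : A → E →ₗ[F] V) (P : ι → Submodule F U)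
    (L : ι → Submodule F V) : κ × A ⊕ ι → Submodule F (U × V) :=
  Sum.elim (fun x ↦ LinearMap.range ((g x.1).prod (D x.2))) fun i ↦ (P i).prod (L i)

variable [FiniteDimensional F U] [FiniteDimensional F V]
  {g : κ → E →ₗ[F] U} {D : A → E →ₗ[F] V}
  {P : ι → Submodule F U} {L : ι → Submodule F V}

theorem finrank_liftedCode (hE : finrank F E = 3) (hg : ∀ x, Function.Injective (g x))
    (hP : ∀ i, finrank F (P i) = 1) (hL : ∀ i, finrank F (L i) = 2) (x : κ × A ⊕ ι) :
    finrank F (liftedCode g D P L x) = 3 := by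
  rcases x with ⟨x, a⟩ | i
  · exact (finrank_range_prod (hg x) (D a)).trans hE
  · exact (Submodule.finrank_prod (P i) (L i)).trans (by rw [hP, hL])

theorem liftedCode_pairwise_finrank_inf_le_one [FiniteDimensional F E]
    (hg : ∀ x, Function.Injective (g x))
    (hgg : Pairwise fun x y ↦
      finrank F (LinearMap.range (g x) ⊓ LinearMap.range (g y) : Submodule F U) ≤ 1)
    (hD : Pairwise fun a b ↦ finrank F (LinearMap.ker (D a - D b)) ≤ 1)
    (hPinj : Function.Injective P) (hP : ∀ i, finrank F (P i) = 1)
    (hLinj : Function.Injective L) (hL : ∀ i, finrank F (L i) = 2) :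
    Pairwise fun x y ↦
      finrank F (liftedCode g D P L x ⊓ liftedCode g D P L y : Submodule F (U × V)) ≤ 1 := by
  rintro (⟨x, a⟩ | i) (⟨y, b⟩ | j) hne
  · by_cases hxy : x = y
    · subst hxy
      have hab : a ≠ b := fun h ↦ hne (h ▸ rfl)
      exact (finrank_range_prod_inf_le_finrank_ker (hg x)).trans (hD hab)
    · exact (finrank_range_prod_inf_le_finrank_range_inf (hg x)).trans (hgg hxy)
  · exact finrank_range_prod_inf_prod_le_one (hg x) (hP j) (hL j)
  · have := finrank_range_prod_inf_prod_le_one (D := D b) (hg y) (hP i) (hL i)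
    rwa [inf_comm] at this
  · have hij : i ≠ j := fun h ↦ hne (h ▸ rfl)
    have hPij := finrank_inf_lt_of_ne (hP i) (hP j) (hPinj.ne hij)
    have hLij := finrank_inf_lt_of_ne (hL i) (hL j) (hLinj.ne hij)
    change finrank F ((P i).prod (L i) ⊓ (P j).prod (L j) : Submodule F _) ≤ 1
    rw [Submodule.prod_inf_prod, Submodule.finrank_prod]
    omega

end Lifting

section Codes

variable {F : Type*} [Field F]

theorem subspaceDist_eq {n k : ℕ} {U W : Submodule F (Fin n → F)} (hU : finrank F U = k)
    (hW : finrank F W = k) :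
    subspaceDist F U W = 2 * (k - finrank F (U ⊓ W : Submodule F _)) := by
  have := Submodule.finrank_mono (inf_le_left : U ⊓ W ≤ U)
  unfold subspaceDist
  omega

theorem finrank_inf_le_of_le_subspaceDist {n k m : ℕ} {U W : Submodule F (Fin n → F)}
    (hU : finrank F U = k) (hW : finrank F W = k) (h : 2 * (k - m) ≤ subspaceDist F U W) :
    finrank F (U ⊓ W : Submodule F _) ≤ m := by
  have := Submodule.finrank_mono (inf_le_left : U ⊓ W ≤ U)
  rw [subspaceDist_eq hU hW] at h
  omega

theorem pairwise_finrank_inf_le_of_le_subspaceDist {n k m : ℕ}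
    {C : Finset (Submodule F (Fin n → F))} (hC : ∀ U ∈ C, finrank F U = k)
    (hd : ∀ U ∈ C, ∀ W ∈ C, U ≠ W → 2 * (k - m) ≤ subspaceDist F U W) :
    Pairwise fun U W : C ↦ finrank F (U.1 ⊓ W.1 : Submodule F _) ≤ m :=
  fun U W hne ↦ finrank_inf_le_of_le_subspaceDist (hC U U.2) (hC W W.2)
    (hd U U.2 W W.2 (Subtype.coe_ne_coe.mpr hne))

theorem exists_code_of_pairwise {V ι : Type*} [AddCommGroup V] [Module F V]
    [FiniteDimensional F V] [Finite ι] {n k m : ℕ} (hV : finrank F V = n)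
    (Φ : ι → Submodule F V) (hΦ : ∀ i, finrank F (Φ i) = k) (hm : m < k)
    (hinf : Pairwise fun i j ↦ finrank F (Φ i ⊓ Φ j : Submodule F V) ≤ m) :
    ∃ C : Finset (Submodule F (Fin n → F)), C.card = Nat.card ι ∧
      (∀ U ∈ C, finrank F U = k) ∧
      ∀ U ∈ C, ∀ W ∈ C, U ≠ W → 2 * (k - m) ≤ subspaceDist F U W := by
  classical
  have := Fintype.ofFinite ι
  let e := LinearEquiv.ofFinrankEq V (Fin n → F) (hV.trans (finrank_fin_fun F).symm)
  set Ψ := fun i ↦ (Φ i).map (e : V →ₗ[F] Fin n → F)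
  have hdim i : finrank F (Ψ i) = k := by
    rw [LinearEquiv.finrank_map_eq, hΦ]
  have hinf' {i j} (hij : i ≠ j) : finrank F (Ψ i ⊓ Ψ j : Submodule F _) ≤ m := by
    rw [← Submodule.map_inf _ e.injective, LinearEquiv.finrank_map_eq]
    exact hinf hij
  have hinj : Function.Injective Ψ := fun i j h ↦ by
    by_contra hij
    have := hinf' hij
    rw [h, inf_idem, hdim] at this
    omega
  refine ⟨Finset.univ.image Ψ, ?_, ?_, ?_⟩
  · rw [Finset.card_image_of_injective _ hinj, Finset.card_univ, Nat.card_eq_fintype_card]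
  · simp [hdim]
  · simp only [Finset.mem_image, Finset.mem_univ, true_and]
    rintro _ ⟨i, rfl⟩ _ ⟨j, rfl⟩ hne
    rw [subspaceDist_eq (hdim i) (hdim j)]
    have := hinf' fun h ↦ hne (congrArg Ψ h)
    omega

end Codes

end SubspaceCode

open Module SubspaceCode in
theorem statement13_general (q N : ℕ)
    (F : Type*) [Field F] [Fintype F] (hF : Fintype.card F = q)
    (h : ∃ C : Finset (Submodule F (Fin 7 → F)),
      C.card = N ∧
      (∀ U ∈ C, Module.finrank F ↥U = 3) ∧
      (∀ U ∈ C, ∀ W ∈ C, U ≠ W → 4 ≤ subspaceDist F U W)) :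
    ∃ C : Finset (Submodule F (Fin 11 → F)),
      C.card = q ^ 8 * N + q ^ 4 + q ^ 3 + 2 * q ^ 2 + q + 1 ∧
      (∀ U ∈ C, Module.finrank F ↥U = 3) ∧
      (∀ U ∈ C, ∀ W ∈ C, U ≠ W → 4 ≤ subspaceDist F U W) := by
  obtain ⟨C₀, rfl, hdim, hdist⟩ := h
  have hq : Nat.card F = q := Nat.card_eq_fintype_card.trans hF
  obtain ⟨p, _⟩ := CharP.exists F
  have : Fact p.Prime := ⟨CharP.char_is_prime F p⟩
  let K := FiniteField.Extension F p 4
  have hK : finrank F K = 4 := FiniteField.finrank_extension F p 4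
  choose g hg hrange using fun W : C₀ ↦ exists_injective_range_eq (E := Fin 3 → F) (W := W.1)
    ((finrank_fin_fun F).trans (hdim W W.2).symm)
  obtain ⟨j, hj⟩ :=
    exists_injective_of_finrank_le (F := F) (E := Fin 3 → F) (V := K) (by simp [hK])
  obtain ⟨P, hP⟩ := exists_injective_fin_of_le_natCard
    (le_natCard_projectivization_of_finrank_eq_seven hq (finrank_fin_fun F))
  obtain ⟨L, hL⟩ :=
    exists_injective_fin_of_le_natCard (le_numSubspaces_two_of_finrank_eq_four hq hK)
  have hgg : Pairwise fun W W' : C₀ ↦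
      finrank F (LinearMap.range (g W) ⊓ LinearMap.range (g W') : Submodule F _) ≤ 1 :=
    fun W W' hne ↦ by
      dsimp only
      rw [hrange, hrange]
      exact pairwise_finrank_inf_le_of_le_subspaceDist (m := 1) hdim hdist hne
  have hD : Pairwise fun a b : K × K ↦
      finrank F (LinearMap.ker (gabidulin a ∘ₗ j - gabidulin b ∘ₗ j)) ≤ 1 :=
    fun _ _ ↦ finrank_ker_gabidulin_comp_sub_le_one hj
  have hinf := liftedCode_pairwise_finrank_inf_le_one hg hgg hD
    (Projectivization.submodule_injective.comp hP) (fun i ↦ (P i).finrank_submodule)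
    (Subtype.val_injective.comp hL) (L · |>.2)
  obtain ⟨C, hcard, hC, hCdist⟩ := exists_code_of_pairwise (V := (Fin 7 → F) × K) (n := 11)
    (by simp [hK])
    (liftedCode g (fun a ↦ gabidulin a ∘ₗ j) (fun i ↦ (P i).submodule) (L · |>.1))
    (finrank_liftedCode (by simp) hg (fun i ↦ (P i).finrank_submodule) (L · |>.2))
    (by norm_num) hinf
  refine ⟨C, ?_, hC, hCdist⟩
  rw [hcard, Nat.card_sum, Nat.card_prod, Nat.card_prod, Nat.card_fin, Nat.card_eq_finsetCard,
    FiniteField.natCard_extension, hq]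
  ring

theorem statement13 (q N : ℕ) (hq : IsPrimePow q)
    (F : Type*) [Field F] [Fintype F] (hF : Fintype.card F = q)
    (h : ∃ C : Finset (Submodule F (Fin 7 → F)),
      C.card = N ∧
      (∀ U ∈ C, Module.finrank F ↥U = 3) ∧
      (∀ U ∈ C, ∀ W ∈ C, U ≠ W → 4 ≤ subspaceDist F U W)) :
    ∃ C : Finset (Submodule F (Fin 11 → F)),
      C.card = q ^ 8 * N + q ^ 4 + q ^ 3 + 2 * q ^ 2 + q + 1 ∧
      (∀ U ∈ C, Module.finrank F ↥U = 3) ∧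
      (∀ U ∈ C, ∀ W ∈ C, U ≠ W → 4 ≤ subspaceDist F U W) :=
  statement13_general q N F hF h
end

section
/- Let 1 ≤ k ≤ m ≤ n be integers and d an even integer with 4 ≤ d ≤ 2k. Let 𝒮 ⊆ 𝔽_2^n be a set of binary vectors, each of Hamming weight k and having at most k − d/2 ones among the first m coordinates, such that the Hamming distance between any two distinct elements of 𝒮 is at least d. For each integer j let c_j = #{v ∈ 𝒮 : v has exactly j ones among the first m coordinates}. Then for every integer i with 0 ≤ i ≤ k − d/2 + 1 one has Σ_j binom(j, i)·binom(k − j, k − d/2 + 1 − i)·c_j ≤ binom(m, i)·binom(n − m, k − d/2 + 1 − i), where the sum runs over all j with c_j ≠ 0 and binom denotes the binomial coefficient (equal to 0 when the lower index is negative or exceeds the upper index). -/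
/-!
Let `t = k - d/2 + 1`. Two distinct codewords of weight `k` at distance at least `d` share at most
`k - d/2 < t` ones, so no pair `(A, B)` with `A` an `i`-subset of the first `m` coordinates, `B` a
`(t - i)`-subset of the remaining ones, and `A ∪ B` inside the support of a codeword, can belong to
two codewords. A codeword with `j` ones among the first `m` coordinates owns
`binom(j, i) binom(k - j, t - i)` such pairs, and there are at most `binom(m, i) binom(n - m, t - i)`
of them in total.
-/

/-- The number of ones of a binary vector `v ∈ 𝔽₂ⁿ` among its first `m` coordinates. -/
def onesAmongFirst {n : ℕ} (m : ℕ) (v : Fin n → Bool) : ℕ :=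
  (Finset.univ.filter fun i : Fin n => (i : ℕ) < m ∧ v i = true).card

open Finset

section Packing

variable {ι α : Type*} [DecidableEq α]

theorem sum_choose_mul_choose_le_of_card_inter_lt (S : Finset ι) (f : ι → Finset α)
    {P Q : Finset α} (hPQ : Disjoint P Q) (i j : ℕ)
    (hS : ∀ v ∈ S, ∀ w ∈ S, v ≠ w → #(f v ∩ f w) < i + j) :
    ∑ v ∈ S, (#(f v ∩ P)).choose i * (#(f v ∩ Q)).choose j ≤ (#P).choose i * (#Q).choose j := by
  set pairs : ι → Finset (Finset α × Finset α) :=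
    fun v => (f v ∩ P).powersetCard i ×ˢ (f v ∩ Q).powersetCard j
  have hdisj : (S : Set ι).PairwiseDisjoint pairs := by
    intro v hv w hw hvw
    refine Finset.disjoint_left.2 fun ⟨A, B⟩ hpv hpw => ?_
    simp only [pairs, mem_product, mem_powersetCard, subset_inter_iff] at hpv hpw
    obtain ⟨⟨⟨hAv, hAP⟩, hA⟩, ⟨hBv, hBQ⟩, hB⟩ := hpv
    obtain ⟨⟨⟨hAw, -⟩, -⟩, ⟨hBw, -⟩, -⟩ := hpw
    have hcard : #(A ∪ B) = i + j := by
      rw [card_union_of_disjoint (hPQ.mono hAP hBQ), hA, hB]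
    have hsub : A ∪ B ⊆ f v ∩ f w :=
      union_subset (subset_inter hAv hAw) (subset_inter hBv hBw)
    exact (card_le_card hsub).not_gt (hcard ▸ hS v hv w hw hvw)
  have hunion : S.biUnion pairs ⊆ P.powersetCard i ×ˢ Q.powersetCard j :=
    biUnion_subset.2 fun v _ => product_subset_product
      (powersetCard_mono inter_subset_right) (powersetCard_mono inter_subset_right)
  calc ∑ v ∈ S, (#(f v ∩ P)).choose i * (#(f v ∩ Q)).choose j
      = #(S.biUnion pairs) := by
        simp only [card_biUnion hdisj, pairs, card_product, card_powersetCard]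
    _ ≤ (#P).choose i * (#Q).choose j := by
        simpa only [card_product, card_powersetCard] using card_le_card hunion

end Packing

section Ones

variable {ι : Type*} [Fintype ι]

def ones (v : ι → Bool) : Finset ι := {x | v x = true}

theorem hammingDist_false_right (v : ι → Bool) : hammingDist v (fun _ => false) = #(ones v) := by
  simp [hammingDist, ones]

theorem hammingDist_eq_card_sdiff_add_card_sdiff [DecidableEq ι] (v w : ι → Bool) :
    hammingDist v w = #(ones v \ ones w) + #(ones w \ ones v) := by
  rw [← card_union_of_disjoint disjoint_sdiff_sdiff, hammingDist]
  congr 1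
  ext x
  cases hv : v x <;> cases hw : w x <;> simp [ones, hv, hw]

theorem hammingDist_add_two_mul_card_inter [DecidableEq ι] (v w : ι → Bool) :
    hammingDist v w + 2 * #(ones v ∩ ones w) = #(ones v) + #(ones w) := by
  have hv := card_sdiff_add_card_inter (ones v) (ones w)
  have hw := card_sdiff_add_card_inter (ones w) (ones v)
  rw [inter_comm] at hw
  rw [hammingDist_eq_card_sdiff_add_card_sdiff]
  omega

theorem card_ones_inter_le_of_le_hammingDist [DecidableEq ι] {v w : ι → Bool} {k d : ℕ}
    (hv : #(ones v) = k) (hw : #(ones w) = k) (hd : d ≤ hammingDist v w) :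
    #(ones v ∩ ones w) ≤ k - d / 2 := by
  have := hammingDist_add_two_mul_card_inter v w
  omega

end Ones

section FirstCoordinates

variable {n : ℕ} (m : ℕ) (v : Fin n → Bool)

theorem card_ones_inter_filter_lt :
    #(ones v ∩ ({x | (x : ℕ) < m} : Finset (Fin n))) = onesAmongFirst m v := by
  rw [onesAmongFirst, ones, inter_comm, ← filter_and]

theorem card_ones_inter_compl_filter_lt :
    #(ones v ∩ ({x | (x : ℕ) < m} : Finset (Fin n))ᶜ) = #(ones v) - onesAmongFirst m v := by
  rw [← card_ones_inter_filter_lt, ← sdiff_eq_inter_compl]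
  exact Nat.eq_sub_of_add_eq' (card_inter_add_card_sdiff _ _)

theorem onesAmongFirst_le_card_ones : onesAmongFirst m v ≤ #(ones v) :=
  card_ones_inter_filter_lt m v ▸ card_le_card inter_subset_left

theorem card_compl_filter_val_lt : #(({x | (x : ℕ) < m} : Finset (Fin n))ᶜ) = n - m := by
  rw [card_compl, Fintype.card_fin, Fin.card_filter_val_lt]
  omega

end FirstCoordinates

theorem statement15_general (n m k d : ℕ)
    (S : Finset (Fin n → Bool))
    (hwt : ∀ v ∈ S, hammingDist v (fun _ => false) = k)
    (hdist : ∀ v ∈ S, ∀ w ∈ S, v ≠ w → d ≤ hammingDist v w)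
    (i : ℕ) :
    ∑ j ∈ Finset.range (k + 1),
        Nat.choose j i * Nat.choose (k - j) (k - d / 2 + 1 - i) *
          (S.filter fun v => onesAmongFirst m v = j).card ≤
      Nat.choose m i * Nat.choose (n - m) (k - d / 2 + 1 - i) := by
  classical
  set t := k - d / 2 + 1
  set M : Finset (Fin n) := {x | (x : ℕ) < m}
  have hcard : ∀ v ∈ S, #(ones v) = k := fun v hv => hammingDist_false_right v ▸ hwt v hv
  have hinter : ∀ v ∈ S, ∀ w ∈ S, v ≠ w → #(ones v ∩ ones w) < i + (t - i) :=
    fun v hv w hw hvw => by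
      have := card_ones_inter_le_of_le_hammingDist (hcard v hv) (hcard w hw) (hdist v hv w hw hvw)
      omega
  have hrange : ∀ v ∈ S, onesAmongFirst m v ∈ range (k + 1) := fun v hv =>
    mem_range_succ_iff.2 (hcard v hv ▸ onesAmongFirst_le_card_ones m v)
  calc ∑ j ∈ range (k + 1), j.choose i * (k - j).choose (t - i) * #{v ∈ S | onesAmongFirst m v = j}
      = ∑ v ∈ S, (onesAmongFirst m v).choose i * (k - onesAmongFirst m v).choose (t - i) := by
        rw [← sum_fiberwise_of_maps_to' hrange fun j => j.choose i * (k - j).choose (t - i)]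
        simp only [sum_const, smul_eq_mul, mul_comm]
    _ = ∑ v ∈ S, (#(ones v ∩ M)).choose i * (#(ones v ∩ Mᶜ)).choose (t - i) :=
        sum_congr rfl fun v hv => by
          rw [card_ones_inter_filter_lt, card_ones_inter_compl_filter_lt, hcard v hv]
    _ ≤ (#M).choose i * (#Mᶜ).choose (t - i) :=
        sum_choose_mul_choose_le_of_card_inter_lt S ones disjoint_compl_right i (t - i) hinter
    _ ≤ m.choose i * (n - m).choose (t - i) := by
        rw [card_compl_filter_val_lt, Fin.card_filter_val_lt]
        gcongr
        exact min_le_right n m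

theorem statement15 (n m k d : ℕ)
    (hk : 1 ≤ k) (hkm : k ≤ m) (hmn : m ≤ n)
    (hd : 4 ≤ d) (hdk : d ≤ 2 * k) (hde : Even d)
    (S : Finset (Fin n → Bool))
    (hwt : ∀ v ∈ S, hammingDist v (fun _ => false) = k)
    (hfirst : ∀ v ∈ S, onesAmongFirst m v ≤ k - d / 2)
    (hdist : ∀ v ∈ S, ∀ w ∈ S, v ≠ w → d ≤ hammingDist v w)
    (i : ℕ) (hi : i ≤ k - d / 2 + 1) :
    ∑ j ∈ Finset.range (k + 1),
        Nat.choose j i * Nat.choose (k - j) (k - d / 2 + 1 - i) *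
          (S.filter fun v => onesAmongFirst m v = j).card ≤
      Nat.choose m i * Nat.choose (n - m) (k - d / 2 + 1 - i) :=
  statement15_general n m k d S hwt hdist i
end
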